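/- Let (T(t))_{t≥0} be a strongly continuous semigroup on a complex Banach space X with ‖T(t)‖ ≤ Ne^{ωt}, and let g, v ∈ BUC(ℝ,X) be such that ‖(T^h g − g)/h − v‖_∞ → 0 as h → 0⁺, where (T^h g)(t) = T(h)g(t−h). Then g satisfies, for all t ≥ s, the integral equation g(t) = T(t−s)g(s) + ∫_s^t T(t−ξ)(−v(ξ)) dξ; in other words, the generator 𝒢 of the evolution semigroup satisfies 𝒢g = −ℒg, where ℒg is the forcing term in the integral equation satisfied by g. -/
import Mathlib


open Set MeasureTheory intervalIntegral
open scoped BoundedContinuousFunction ZeroAtInfty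

noncomputable section

/-- `T` is a strongly continuous semigroup of bounded linear operators with
`‖T t‖ ≤ N * exp (ω * t)`. -/
def IsC0Semigroup {X : Type*} [NormedAddCommGroup X] [NormedSpace ℂ X]
    (T : ℝ → X →L[ℂ] X) (N ω : ℝ) : Prop :=
  T 0 = 1 ∧ (∀ a b : ℝ, 0 ≤ a → 0 ≤ b → T (a + b) = (T a).comp (T b)) ∧
    (∀ x : X, ContinuousOn (fun t : ℝ => T t x) (Set.Ici (0:ℝ))) ∧
    0 < N ∧ 0 < ω ∧ ∀ t : ℝ, 0 ≤ t → ‖T t‖ ≤ N * Real.exp (ω * t)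

/-- If `(T^h g - g)/h → -v`... precisely: if `(T^h g - g)/h → v` in sup norm as `h → 0⁺`
(i.e. `𝒢 g = v` for the generator `𝒢` of the evolution semigroup), then `g` satisfies the
integral equation with forcing term `-v`, i.e. `𝒢 g = -ℒ g`. -/
theorem generator_eq_neg_L {X : Type*} [NormedAddCommGroup X] [NormedSpace ℂ X] [CompleteSpace X]
    (T : ℝ → X →L[ℂ] X) (N ω : ℝ) (hT : IsC0Semigroup T N ω)
    (g v : ℝ →ᵇ X) (hg : UniformContinuous ⇑g) (hv : UniformContinuous ⇑v)
    (hlim : ∀ ε : ℝ, 0 < ε → ∃ δ : ℝ, 0 < δ ∧ ∀ h : ℝ, 0 < h → h < δ →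
      ∀ t : ℝ, ‖h⁻¹ • (T h (g (t - h)) - g t) - v t‖ ≤ ε) :
    ∀ s t : ℝ, s ≤ t →
      g t = T (t - s) (g s) + ∫ ξ in s..t, T (t - ξ) (-(v ξ)) := by
  obtain ⟨hT0, hTadd, hTcont, hN, hω, hTbd⟩ := hT
  -- joint continuity of (r, x) ↦ T r x on (Ici 0) × X
  have Tjc : ∀ r₀ : ℝ, 0 ≤ r₀ → ∀ x₀ : X, ∀ ε : ℝ, 0 < ε → ∃ δ : ℝ, 0 < δ ∧
      ∀ r : ℝ, ∀ x : X, 0 ≤ r → |r - r₀| < δ → ‖x - x₀‖ < δ →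
      ‖T r x - T r₀ x₀‖ < ε := by
    intro r₀ hr₀ x₀ ε hε
    set M := N * Real.exp (ω * (r₀ + 1)) with hMdef
    have hM0 : 0 < M := by positivity
    have hMb : ∀ r : ℝ, 0 ≤ r → r ≤ r₀ + 1 → ‖T r‖ ≤ M := by
      intro r hr hr'
      refine (hTbd r hr).trans ?_
      have h1 : ω * r ≤ ω * (r₀ + 1) := by nlinarith
      have h2 := Real.exp_le_exp.mpr h1
      nlinarith [Real.exp_pos (ω * r)]
    have hc : ContinuousWithinAt (fun r : ℝ => T r x₀) (Ici 0) r₀ := hTcont x₀ r₀ hr₀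
    rw [Metric.continuousWithinAt_iff] at hc
    obtain ⟨δ₁, hδ₁, H₁⟩ := hc (ε / 2) (by positivity)
    refine ⟨min δ₁ (min 1 (ε / (2 * (M + 1)))), by positivity, ?_⟩
    intro r x hr hrr hxx
    have hrδ₁ : |r - r₀| < δ₁ := lt_of_lt_of_le hrr (min_le_left _ _)
    have hr1 : |r - r₀| < 1 :=
      lt_of_lt_of_le hrr ((min_le_right _ _).trans (min_le_left _ _))
    have hxε : ‖x - x₀‖ < ε / (2 * (M + 1)) :=
      lt_of_lt_of_le hxx ((min_le_right _ _).trans (min_le_right _ _))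
    have hrb : r ≤ r₀ + 1 := by
      have := abs_lt.mp hr1; linarith [this.1, this.2]
    have h1 : ‖T r x - T r x₀‖ ≤ M * ‖x - x₀‖ := by
      calc ‖T r x - T r x₀‖ = ‖T r (x - x₀)‖ := by rw [map_sub]
        _ ≤ ‖T r‖ * ‖x - x₀‖ := (T r).le_opNorm _
        _ ≤ M * ‖x - x₀‖ := by
            gcongr
            exact hMb r hr hrb
    have h2 : ‖T r x₀ - T r₀ x₀‖ < ε / 2 := by
      have := H₁ (mem_Ici.mpr hr) (by rw [Real.dist_eq]; exact hrδ₁)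
      rwa [dist_eq_norm] at this
    have htri : ‖T r x - T r₀ x₀‖ ≤ ‖T r x - T r x₀‖ + ‖T r x₀ - T r₀ x₀‖ := by
      have : T r x - T r₀ x₀ = (T r x - T r x₀) + (T r x₀ - T r₀ x₀) := by abel
      rw [this]; exact norm_add_le _ _
    have hkey : M * (ε / (2 * (M + 1))) < ε / 2 := by
      rw [← mul_div_assoc, div_lt_div_iff₀ (by positivity) (by positivity)]
      nlinarith
    have hx1 : M * ‖x - x₀‖ < M * (ε / (2 * (M + 1))) :=
      mul_lt_mul_of_pos_left hxε hM0
    linarith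
  -- continuity of ξ ↦ T (c - ξ) (w ξ) on Iic c
  have contOn : ∀ (w : ℝ → X), Continuous w → ∀ c : ℝ,
      ContinuousOn (fun ξ : ℝ => T (c - ξ) (w ξ)) (Iic c) := by
    intro w hw c ξ₀ hξ₀
    rw [Metric.continuousWithinAt_iff]
    intro ε hε
    obtain ⟨δ, hδ, Hjc⟩ := Tjc (c - ξ₀) (by simp only [mem_Iic] at hξ₀; linarith) (w ξ₀) ε hε
    obtain ⟨δ₂, hδ₂, Hw⟩ := Metric.continuous_iff.mp hw ξ₀ δ hδ
    refine ⟨min δ δ₂, by positivity, ?_⟩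
    intro ξ hξ hd
    rw [dist_eq_norm]
    refine Hjc (c - ξ) (w ξ) (by simp only [mem_Iic] at hξ; linarith) ?_ ?_
    · have : |(c - ξ) - (c - ξ₀)| = |ξ - ξ₀| := by rw [abs_sub_comm]; ring_nf
      rw [this]
      calc |ξ - ξ₀| = dist ξ ξ₀ := (Real.dist_eq _ _).symm
        _ < min δ δ₂ := hd
        _ ≤ δ := min_le_left _ _
    · have := Hw ξ (lt_of_lt_of_le hd (min_le_right _ _))
      rwa [dist_eq_norm] at this
  intro s t hst
  set F : ℝ → X := fun ξ => T (t - ξ) (g ξ) with hFdef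
  set f' : ℝ → X := fun ξ => T (t - ξ) (-(v ξ)) with hf'def
  have hFc : ContinuousOn F (Icc s t) :=
    (contOn g g.continuous t).mono (Icc_subset_Iic_self)
  have hf'c : ContinuousOn f' (Icc s t) :=
    (contOn (fun ξ => -(v ξ)) v.continuous.neg t).mono (Icc_subset_Iic_self)
  have hint : IntervalIntegrable f' volume s t := by
    apply ContinuousOn.intervalIntegrable
    rwa [uIcc_of_le hst]
  have hderiv : ∀ ξ ∈ Ioo s t, HasDerivWithinAt F (f' ξ) (Ioi ξ) ξ := by
    intro ξ hξ
    rw [hasDerivWithinAt_iff_tendsto_slope]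
    have hdiff : Ioi ξ \ {ξ} = Ioi ξ :=
      diff_singleton_eq_self (fun h => lt_irrefl ξ h)
    rw [hdiff, Metric.tendsto_nhdsWithin_nhds]
    intro ε hε
    set M := N * Real.exp (ω * (t - s)) with hMdef
    have hM0 : 0 < M := by positivity
    have hMb : ∀ r : ℝ, 0 ≤ r → r ≤ t - s → ‖T r‖ ≤ M := by
      intro r hr hr'
      refine (hTbd r hr).trans ?_
      have h1 : ω * r ≤ ω * (t - s) := by nlinarith
      have h2 := Real.exp_le_exp.mpr h1
      nlinarith [Real.exp_pos (ω * r)]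
    obtain ⟨δjc, hδjc, Hjc⟩ := Tjc (t - ξ) (by linarith [hξ.2]) (v ξ) (ε / 2) (by positivity)
    obtain ⟨δ₁, hδ₁, H₁⟩ := hlim (ε / (2 * (M + 1))) (by positivity)
    obtain ⟨δv, hδv, Hv⟩ := Metric.continuous_iff.mp v.continuous ξ δjc hδjc
    refine ⟨min (min δ₁ δv) (min δjc (t - ξ)),
      lt_min (lt_min hδ₁ hδv) (lt_min hδjc (by linarith [hξ.2])), ?_⟩
    intro y hy hyd
    set h := y - ξ with hhdef
    have hylt : ξ < y := hy
    have hh0 : 0 < h := sub_pos.mpr hylt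
    have hdist : dist y ξ = h := by rw [Real.dist_eq, abs_of_pos hh0]
    rw [hdist] at hyd
    have hhδ₁ : h < δ₁ := lt_of_lt_of_le hyd ((min_le_left _ _).trans (min_le_left _ _))
    have hhδv : h < δv := lt_of_lt_of_le hyd ((min_le_left _ _).trans (min_le_right _ _))
    have hhδjc : h < δjc := lt_of_lt_of_le hyd ((min_le_right _ _).trans (min_le_left _ _))
    have hhtξ : h < t - ξ := lt_of_lt_of_le hyd ((min_le_right _ _).trans (min_le_right _ _))
    have hty0 : 0 ≤ t - y := by linarith
    have htyts : t - y ≤ t - s := by linarith [hξ.1]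
    -- semigroup splitting
    have e1 : T (t - ξ) = (T (t - y)).comp (T h) := by
      have := hTadd (t - y) h hty0 (le_of_lt hh0)
      rw [show t - y + h = t - ξ by rw [hhdef]; ring] at this
      exact this
    set A : X := h⁻¹ • (T h (g (y - h)) - g y) with hAdef
    have hyh : y - h = ξ := by rw [hhdef]; ring
    have hslope : slope F ξ y = T (t - y) (-A) := by
      rw [slope_def_module]
      have hFy : F y = T (t - y) (g y) := rfl
      have hFξ : F ξ = T (t - y) (T h (g ξ)) := by
        simp only [hFdef]
        rw [e1]; rfl
      rw [hFy, hFξ, ← map_sub, ← hhdef]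
      rw [← (T (t - y)).map_smul_of_tower]
      congr 1
      rw [hAdef, hyh]
      rw [smul_sub, smul_sub]
      abel
    have hAv : ‖A - v y‖ ≤ ε / (2 * (M + 1)) := H₁ h hh0 hhδ₁ y
    have hvv : ‖v y - v ξ‖ < δjc := by
      have := Hv y (by rw [hdist]; exact lt_of_lt_of_le hyd ((min_le_left _ _).trans (min_le_right _ _)))
      rwa [dist_eq_norm] at this
    have hjc2 : ‖T (t - y) (v y) - T (t - ξ) (v ξ)‖ < ε / 2 := by
      refine Hjc (t - y) (v y) hty0 ?_ hvv
      have : |(t - y) - (t - ξ)| = h := by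
        rw [show (t - y) - (t - ξ) = -h by rw [hhdef]; ring, abs_neg, abs_of_pos hh0]
      rw [this]; exact hhδjc
    have hfirst : ‖T (t - y) (A - v y)‖ ≤ M * (ε / (2 * (M + 1))) := by
      calc ‖T (t - y) (A - v y)‖ ≤ ‖T (t - y)‖ * ‖A - v y‖ := (T (t - y)).le_opNorm _
        _ ≤ M * (ε / (2 * (M + 1))) := by
            apply mul_le_mul (hMb _ hty0 htyts) hAv (norm_nonneg _) (le_of_lt hM0)
    rw [dist_eq_norm, hslope]
    have hfξ : f' ξ = T (t - ξ) (-(v ξ)) := rfl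
    have hsplit : T (t - y) (-A) - f' ξ =
        -(T (t - y) (A - v y)) - (T (t - y) (v y) - T (t - ξ) (v ξ)) := by
      rw [hfξ, map_neg, map_neg, map_sub]
      abel
    rw [hsplit]
    calc ‖-(T (t - y) (A - v y)) - (T (t - y) (v y) - T (t - ξ) (v ξ))‖
        ≤ ‖-(T (t - y) (A - v y))‖ + ‖T (t - y) (v y) - T (t - ξ) (v ξ)‖ := norm_sub_le _ _
      _ = ‖T (t - y) (A - v y)‖ + ‖T (t - y) (v y) - T (t - ξ) (v ξ)‖ := by rw [norm_neg]
      _ < ε := by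
          have hkey : M * (ε / (2 * (M + 1))) < ε / 2 := by
            rw [← mul_div_assoc, div_lt_div_iff₀ (by positivity) (by positivity)]
            nlinarith
          linarith
  have hFTC : (∫ ξ in s..t, f' ξ) = F t - F s :=
    integral_eq_sub_of_hasDeriv_right_of_le hst hFc hderiv hint
  have hFt : F t = g t := by
    simp only [hFdef, sub_self, hT0]
    rfl
  have hFs : F s = T (t - s) (g s) := rfl
  rw [hFt, hFs] at hFTC
  have : (∫ ξ in s..t, T (t - ξ) (-(v ξ))) = g t - T (t - s) (g s) := hFTC
  rw [this]
  abel
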